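/- Polynomial interpolation for degeneration: if t ⊵^e t' (t degenerates to t' with error degree e, i.e. there are ε-polynomial-valued linear maps m_j(ε) with (m₁(ε)⊗⋯⊗m_k(ε))t = ε^d t' + ε^{d+1}t₁ + ⋯ + ε^{d+e}t_e for some tensors t_i), then the (e+1)-fold direct sum ⊕_{i=1}^{e+1} t restricts to t'. -/

import Mathlib

open scoped BigOperators

/-- A `k`-tensor with index set `ι j` in the `j`-th factor. -/
def MTensor {k : ℕ} (ι : Fin k → Type) : Type := ((j : Fin k) → ι j) → ℂ

/-- Restriction of tensors: `t ≥ t'` iff `t' = (m₁ ⊗ ⋯ ⊗ m_k) t` for linear maps `m_j`. -/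
def mres {k : ℕ} {ι ι' : Fin k → Type} [∀ j, Fintype (ι j)]
    (t : MTensor ι) (t' : MTensor ι') : Prop :=
  ∃ m : (j : Fin k) → ι' j → ι j → ℂ,
    ∀ x : (j : Fin k) → ι' j,
      t' x = ∑ y : (j : Fin k) → ι j, (∏ j, m j (x j) (y j)) * t y

/-- The unit tensor (GHZ-state) `GHZ_r^{(k)} = Σ_{i=1}^r e_i ⊗ ⋯ ⊗ e_i`. -/
def GHZ (k r : ℕ) : MTensor (fun _ : Fin k => Fin r) :=
  fun x => if ∃ i : Fin r, ∀ j, x j = i then 1 else 0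

/-- Kronecker tensor product of two k-tensors, grouping corresponding factors. -/
def kron {k : ℕ} {ι κ : Fin k → Type} (s : MTensor ι) (t : MTensor κ) :
    MTensor (fun j => ι j × κ j) :=
  fun x => s (fun j => (x j).1) * t (fun j => (x j).2)

/-- Direct sum of two k-tensors (block embedding). -/
def dsum {k : ℕ} {ι κ : Fin k → Type} (s : MTensor ι) (t : MTensor κ) :
    MTensor (fun j => ι j ⊕ κ j) :=
  fun x =>
    (if h : ∀ j, (x j).isLeft then s (fun j => (x j).getLeft (h j)) else 0)
      + (if h : ∀ j, (x j).isRight then t (fun j => (x j).getRight (h j)) else 0)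

/-- `r`-fold direct sum `⊕_{i=1}^r t` of a k-tensor (block-diagonal embedding). -/
def dsumPow {k : ℕ} (r : ℕ) {ι : Fin k → Type} (t : MTensor ι) :
    MTensor (fun j => Fin r × ι j) :=
  fun x => if ∃ i : Fin r, ∀ j, (x j).1 = i then t (fun j => (x j).2) else 0

/-- `t` has tensor rank at most `r`: it is a sum of `r` simple tensors. -/
def HasRankLE {k : ℕ} {ι : Fin k → Type} (t : MTensor ι) (r : ℕ) : Prop :=
  ∃ v : Fin r → (j : Fin k) → ι j → ℂ,
    ∀ x, t x = ∑ l : Fin r, ∏ j, v l j (x j)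

/-- Tensor rank: the least `r` such that `t` is a sum of `r` simple tensors,
equivalently the least `r` with `GHZ_r ≥ t`. -/
noncomputable def trank {k : ℕ} {ι : Fin k → Type} (t : MTensor ι) : ℕ :=
  sInf {r | HasRankLE t r}

/-!
Evaluate the degeneration at `e + 1` distinct nonzero points `a i`: each
`(m₁(a i) ⊗ ⋯ ⊗ m_k(a i)) t = (a i)^d q(a i)` is a restriction of `t`, where
`q(ε) = t' + ε t₁ + ⋯ + ε^e t_e` has degree at most `e`. Lagrange interpolation at the `a i`
recovers `t' = q(0)` as a linear combination `∑ i, c i (a i)^d q(a i)`, and a linear combination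
of `e + 1` restrictions of `t` is a restriction of `⊕_{i=1}^{e+1} t`: apply the `i`-th evaluated
maps on the `i`-th block and absorb the weight `c i` into one tensor factor.
-/

open Polynomial

theorem exists_weights_eval_X_pow_mul_eq_eval_zero (K : Type*) [Field K] [CharZero K] (d n : ℕ) :
    ∃ a c : Fin n → K, ∀ q : K[X], q.degree < n →
      ∑ i, c i * (X ^ d * q).eval (a i) = q.eval 0 := by
  set a : Fin n → K := fun i => (i : ℕ) + 1
  have ha : Set.InjOn a (Finset.univ : Finset (Fin n)) := fun i _ j _ hij =>
    Fin.ext (by simpa [a] using hij)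
  have ha0 : ∀ i, a i ≠ 0 := fun i => Nat.cast_add_one_ne_zero (i : ℕ)
  refine ⟨a, fun i => (Lagrange.basis Finset.univ a i).eval 0 / a i ^ d, fun q hq => ?_⟩
  conv_rhs => rw [Lagrange.eq_interpolate (f := q) ha (by simpa using hq)]
  simp only [Lagrange.interpolate_apply, eval_finsetSum, eval_mul, eval_C, eval_pow, eval_X]
  refine Finset.sum_congr rfl fun i _ => ?_
  field_simp [ha0 i]

theorem eval_zero_eq_of_C_eq_X_pow_mul {R : Type*} [CommSemiring R] [NoZeroDivisors R]
    [Nontrivial R] {a : R} {q : R[X]} {d : ℕ} (h : C a = X ^ d * q) : q.eval 0 = a := by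
  rcases d with _ | d
  · rw [pow_zero, one_mul] at h
    simp [← h]
  · have ha : a = 0 := by simpa using congrArg (eval 0) h
    subst ha
    simp [eq_comm (a := (0 : R[X])), X_ne_zero] at h
    simp [h]

theorem X_pow_mul_C_add_sum {R : Type*} [CommSemiring R] (d : ℕ) {e : ℕ} (a : R)
    (b : Fin e → R) :
    C a * X ^ d + ∑ i : Fin e, C (b i) * X ^ (d + 1 + (i : ℕ))
      = X ^ d * (C a + ∑ i : Fin e, C (b i) * X ^ ((i : ℕ) + 1)) := by
  rw [mul_add, Finset.mul_sum]
  congr 1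
  · ring
  · exact Finset.sum_congr rfl fun i _ => by ring

theorem degree_C_add_sum_lt {R : Type*} [CommSemiring R] {e : ℕ} (a : R) (b : Fin e → R) :
    (C a + ∑ i : Fin e, C (b i) * X ^ ((i : ℕ) + 1)).degree < (e + 1 : ℕ) := by
  rw [← mem_degreeLT]
  refine add_mem ?_ (Submodule.sum_mem _ fun i _ => ?_) <;> rw [mem_degreeLT]
  · exact (degree_C_le).trans_lt (by exact_mod_cast Nat.succ_pos e)
  · exact (degree_C_mul_X_pow_le _ _).trans_lt (by exact_mod_cast Nat.succ_lt_succ i.isLt)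

section Restriction

variable {k : ℕ} {ι ι' : Fin k → Type} [∀ j, Fintype (ι j)]

def resBy (n : (j : Fin k) → ι' j → ι j → ℂ) (t : MTensor ι) :
    ((j : Fin k) → ι' j) → ℂ :=
  fun x => ∑ y : (j : Fin k) → ι j, (∏ j, n j (x j) (y j)) * t y

theorem mres_of_forall_eq_resBy {t : MTensor ι} {s : MTensor ι'}
    (n : (j : Fin k) → ι' j → ι j → ℂ) (h : ∀ x, s x = resBy n t x) : mres t s :=
  ⟨n, h⟩

theorem resBy_mul_ite_eq (j₀ : Fin k) (c : ℂ) (n : (j : Fin k) → ι' j → ι j → ℂ)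
    (t : MTensor ι) (x : (j : Fin k) → ι' j) :
    resBy (fun j x' y => (if j = j₀ then c else 1) * n j x' y) t x = c * resBy n t x := by
  simp only [resBy, Finset.mul_sum, Finset.prod_mul_distrib, Finset.prod_ite_eq',
    Finset.mem_univ, if_true, mul_assoc]

theorem resBy_dsumPow [NeZero k] {r : ℕ} (n : Fin r → (j : Fin k) → ι' j → ι j → ℂ)
    (t : MTensor ι) (x : (j : Fin k) → ι' j) :
    resBy (fun j x' p => n p.1 j x' p.2) (dsumPow r t) x = ∑ i, resBy (n i) t x := by
  have hinj :
      Function.Injective fun p : Fin r × ((j : Fin k) → ι j) => fun j => (p.1, p.2 j) := by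
    intro p q hpq
    simp only [funext_iff, Prod.ext_iff, forall_and] at hpq
    exact Prod.ext (hpq.1 0) (funext hpq.2)
  simp only [resBy]
  rw [← Fintype.sum_prod_type']
  refine (Fintype.sum_of_injective _ hinj _ _ (fun y hy => ?_) fun p => ?_).symm
  · simp only [dsumPow]
    rw [if_neg, mul_zero]
    rintro ⟨i, hi⟩
    exact hy ⟨(i, fun j => (y j).2), funext fun j => Prod.ext (hi j).symm rfl⟩
  · simp only [dsumPow]
    rw [if_pos ⟨p.1, fun _ => rfl⟩]

theorem eval_sum_prod_mul_C (m : (j : Fin k) → ι' j → ι j → ℂ[X]) (t : MTensor ι)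
    (x : (j : Fin k) → ι' j) (a : ℂ) :
    (∑ y : (j : Fin k) → ι j, (∏ j, m j (x j) (y j)) * C (t y)).eval a
      = resBy (fun j x' y => (m j x' y).eval a) t x := by
  simp [resBy, eval_finsetSum, eval_prod]

end Restriction

/-- polynomial interpolation: if `t ⊵^e t'`, i.e. there are matrices
`m_j(ε)` with polynomial entries such that
`(m₁(ε)⊗⋯⊗m_k(ε)) t = ε^d t' + Σ_{i=1}^e ε^{d+i} t_i`,
then the `(e+1)`-fold direct sum `⊕_{i=1}^{e+1} t` restricts to `t'`. -/
theorem interpolation {k e d : ℕ} {ι ι' : Fin k → Type}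
    [∀ j, Fintype (ι j)] [∀ j, Fintype (ι' j)]
    (t : MTensor ι) (t' : MTensor ι')
    (m : (j : Fin k) → ι' j → ι j → Polynomial ℂ)
    (terr : Fin e → MTensor ι')
    (h : ∀ x' : (j : Fin k) → ι' j,
      (∑ y : (j : Fin k) → ι j, (∏ j, m j (x' j) (y j)) * Polynomial.C (t y))
        = Polynomial.C (t' x') * Polynomial.X ^ d
          + ∑ i : Fin e, Polynomial.C (terr i x') * Polynomial.X ^ (d + 1 + (i : ℕ))) :
    mres (dsumPow (e + 1) t) t' := by
  set q : ((j : Fin k) → ι' j) → ℂ[X] := fun x' =>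
    C (t' x') + ∑ i, C (terr i x') * X ^ ((i : ℕ) + 1)
  have hq : ∀ x', (∑ y, (∏ j, m j (x' j) (y j)) * C (t y)) = X ^ d * q x' := fun x' =>
    (h x').trans (X_pow_mul_C_add_sum d _ _)
  have hq0 : ∀ x', (q x').eval 0 = t' x' := fun x' => by simp [q, eval_finsetSum]
  rcases k with _ | k
  -- With no tensor factor to absorb interpolation weights, `t' = q(0)` is read off directly.
  · refine ⟨fun j => j.elim0, fun x' => ?_⟩
    have hqt := eval_zero_eq_of_C_eq_X_pow_mul (by simpa using hq x')
    simp only [Finset.univ_unique, Finset.univ_eq_empty, Finset.prod_empty, dsumPow,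
      IsEmpty.forall_iff, exists_const, ↓reduceIte, one_mul, Finset.sum_singleton]
    rw [← hq0, hqt]
    exact congrArg t (Subsingleton.elim _ _)
  · obtain ⟨a, c, hc⟩ := exists_weights_eval_X_pow_mul_eq_eval_zero ℂ d (e + 1)
    have ht' : ∀ x', t' x' = resBy (fun j x' p => (if j = 0 then c p.1 else 1) *
        (m j x' p.2).eval (a p.1)) (dsumPow (e + 1) t) x' := fun x' => calc
      t' x' = (q x').eval 0 := (hq0 x').symm
      _ = ∑ i, c i * (X ^ d * q x').eval (a i) := (hc _ (degree_C_add_sum_lt _ _)).symm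
      _ = ∑ i, c i * resBy (fun j x' y => (m j x' y).eval (a i)) t x' := by
        simp only [← hq, eval_sum_prod_mul_C]
      _ = ∑ i, resBy (fun j x' y => (if j = 0 then c i else 1) * (m j x' y).eval (a i)) t x' := by
        simp only [resBy_mul_ite_eq]
      _ = _ := (resBy_dsumPow _ t x').symm
    exact mres_of_forall_eq_resBy _ ht'
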